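/- For n ≥ 2 let 𝓕̃_{n+1}(q) = q^{n−1}·𝓕_{n+1}(1/q) be the reversal of 𝓕_{n+1}, and regard g_n = 𝓕̃_{n+1}·(𝓕_n)^{-1} as an element of the formal power series ring ℚ⟦q⟧ (the constant coefficient of 𝓕_n is 1, so 𝓕_n is invertible there). Then for every k ≥ 0 the coefficient of q^k in g_n is eventually constant in n, and its eventual value equals the coefficient κ_k of the unique power series f over ℝ with q·f² = (q² + q − 1)·f + 1. -/

import Mathlib

open Polynomial

noncomputable def fibPoly : ℕ → Polynomial ℤ
  | 0 => 0
  | 1 => 1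
  | (n + 2) =>
    if n % 2 = 0 then fibPoly (n + 1) + X ^ 2 * fibPoly n
    else X * fibPoly (n + 1) + fibPoly n

/-- `g_n = 𝓕̃_{n+1}·(𝓕_n)⁻¹` viewed in `ℚ⟦q⟧`, where `𝓕̃_{n+1}(q) = q^{n−1}·𝓕_{n+1}(1/q)`. -/
noncomputable def fibRatio (n : ℕ) : PowerSeries ℚ :=
  (((reflect (n - 1) (fibPoly (n + 1))).map (Int.castRingHom ℚ) : Polynomial ℚ) :
      PowerSeries ℚ) *
    (((fibPoly n).map (Int.castRingHom ℚ) : Polynomial ℚ) : PowerSeries ℚ)⁻¹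

/-!
Put `Q(a, b) = q a² − (q² + q − 1) a b − b²`, so that `[φ]_q` is the power-series root of
`Q(·, 1) = 0`. The reversed polynomials `𝓕̃_{n+1}` obey the same recurrence as the `𝓕_n`, and a
Cassini-type induction gives `Q(𝓕̃_{n+1}, 𝓕_n) = −q^{n+1}` for odd `n` and `q^{n−1}` for even `n`.
On the other hand `φ · Q(a, b) = (a − φ b)(q φ a + b)`, and the second factor is invertible
whenever `b(0) ≠ 0`; hence `a b⁻¹ − φ` is a multiple of `Q(a, b)`, and `g_n ≡ [φ]_q` modulo
`q^{n−1}`.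
-/

theorem Polynomial.reflect_add_eq_X_pow_mul {R : Type*} [Semiring R] {p : R[X]} {N : ℕ}
    (hp : p.natDegree ≤ N) (k : ℕ) : reflect (N + k) p = X ^ k * reflect N p := by
  rw [X_pow_mul, ← reflect_one, ← reflect_mul p 1 hp (by simp), mul_one]

theorem Polynomial.reflect_X_pow_mul {R : Type*} [Semiring R] {p : R[X]} {N : ℕ}
    (hp : p.natDegree ≤ N) (k : ℕ) : reflect (N + k) (X ^ k * p) = reflect N p := by
  rw [add_comm, reflect_mul _ _ (natDegree_X_pow_le k) hp, reflect_monomial, revAt_le le_rfl,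
    Nat.sub_self, pow_zero, one_mul]

theorem fibPoly_one : fibPoly 1 = 1 := by
  rw [fibPoly]

theorem fibPoly_two : fibPoly 2 = 1 := by
  simp [fibPoly]

theorem natDegree_fibPoly_add_two_le (n : ℕ) : (fibPoly (n + 2)).natDegree ≤ n := by
  induction n using Nat.strong_induction_on with
  | _ n ih =>
    match n, ih with
    | 0, _ => simp [fibPoly]
    | 1, _ => simp [fibPoly]; compute_degree!
    | n + 2, ih =>
      have h₁ : (fibPoly (n + 2 + 1)).natDegree ≤ n + 1 := ih (n + 1) (by omega)
      have h₀ : (fibPoly (n + 2)).natDegree ≤ n := ih n (by omega)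
      rw [fibPoly]
      split_ifs
      · refine (natDegree_add_le _ _).trans (max_le (by omega) ?_)
        exact natDegree_mul_le.trans (by rw [natDegree_X_pow]; omega)
      · refine (natDegree_add_le _ _).trans (max_le ?_ (by omega))
        exact natDegree_mul_le.trans (by rw [natDegree_X]; omega)

theorem coeff_fibPoly_zero {n : ℕ} (hn : n ≠ 0) : (fibPoly n).coeff 0 = 1 := by
  induction n using Nat.strong_induction_on with
  | _ n ih =>
    match n, ih with
    | 1, _ => simp [fibPoly]
    | n + 2, ih =>
      rw [fibPoly]
      split_ifs
      · simp [ih (n + 1) (by omega) (by omega)]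
      · simp [ih n (by omega) (by omega)]

theorem fibPoly_add_two_of_even {n : ℕ} (hn : Even n) :
    fibPoly (n + 2) = fibPoly (n + 1) + X ^ 2 * fibPoly n := by
  rw [fibPoly, if_pos (Nat.even_iff.mp hn)]

theorem fibPoly_add_two_of_odd {n : ℕ} (hn : Odd n) :
    fibPoly (n + 2) = X * fibPoly (n + 1) + fibPoly n := by
  rw [fibPoly, if_neg (by grind)]

noncomputable def fibPolyRev (n : ℕ) : ℤ[X] := reflect (n - 1) (fibPoly (n + 1))

theorem fibPolyRev_one : fibPolyRev 1 = 1 := by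
  simp [fibPolyRev, fibPoly_two, reflect_one]

theorem fibPolyRev_two : fibPolyRev 2 = X + 1 := by
  simp [fibPolyRev, fibPoly, reflect_add, reflect_one, add_comm]

theorem fibPolyRev_add_two_of_odd {n : ℕ} (hn : Odd n) :
    fibPolyRev (n + 2) = X * fibPolyRev (n + 1) + fibPolyRev n := by
  obtain ⟨n, rfl⟩ : ∃ m, n = m + 1 := ⟨n - 1, by grind⟩
  have hF : fibPoly (n + 4) = fibPoly (n + 3) + X ^ 2 * fibPoly (n + 2) :=
    fibPoly_add_two_of_even (n := n + 2) (by grind)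
  have h₁ : reflect (n + 2) (fibPoly (n + 3)) = X ^ 1 * reflect (n + 1) (fibPoly (n + 3)) :=
    reflect_add_eq_X_pow_mul (natDegree_fibPoly_add_two_le (n + 1)) 1
  have h₂ : reflect (n + 2) (X ^ 2 * fibPoly (n + 2)) = reflect n (fibPoly (n + 2)) :=
    reflect_X_pow_mul (natDegree_fibPoly_add_two_le n) 2
  change reflect (n + 2) (fibPoly (n + 4)) =
    X * reflect (n + 1) (fibPoly (n + 3)) + reflect n (fibPoly (n + 2))
  rw [hF, reflect_add, h₁, h₂, pow_one]

theorem fibPolyRev_add_two_of_even {n : ℕ} (hn : Even n) (hn₀ : n ≠ 0) :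
    fibPolyRev (n + 2) = fibPolyRev (n + 1) + X ^ 2 * fibPolyRev n := by
  obtain ⟨n, rfl⟩ : ∃ m, n = m + 1 := ⟨n - 1, by omega⟩
  have hF : fibPoly (n + 4) = X * fibPoly (n + 3) + fibPoly (n + 2) :=
    fibPoly_add_two_of_odd (n := n + 2) (by grind)
  have h₁ : reflect (n + 2) (X ^ 1 * fibPoly (n + 3)) = reflect (n + 1) (fibPoly (n + 3)) :=
    reflect_X_pow_mul (natDegree_fibPoly_add_two_le (n + 1)) 1
  have h₂ : reflect (n + 2) (fibPoly (n + 2)) = X ^ 2 * reflect n (fibPoly (n + 2)) :=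
    reflect_add_eq_X_pow_mul (natDegree_fibPoly_add_two_le n) 2
  change reflect (n + 2) (fibPoly (n + 4)) =
    reflect (n + 1) (fibPoly (n + 3)) + X ^ 2 * reflect n (fibPoly (n + 2))
  rw [hF, reflect_add, h₂, ← h₁, pow_one]

def goldenForm {R : Type*} [CommRing R] (x a b : R) : R :=
  x * a ^ 2 - (x ^ 2 + x - 1) * a * b - b ^ 2

theorem map_goldenForm {R S : Type*} [CommRing R] [CommRing S] (ψ : R →+* S) (x a b : R) :
    ψ (goldenForm x a b) = goldenForm (ψ x) (ψ a) (ψ b) := by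
  simp [goldenForm]

theorem mul_goldenForm_eq {R : Type*} [CommRing R] {x φ : R}
    (hφ : x * φ ^ 2 = (x ^ 2 + x - 1) * φ + 1) (a b : R) :
    φ * goldenForm x a b = (a - φ * b) * (x * φ * a + b) := by
  unfold goldenForm
  linear_combination a * b * hφ

-- The third identity, the polarisation of `goldenForm` at consecutive terms, is what carries the
-- first two through the two-step recurrence.
theorem goldenForm_fibPolyRev_fibPoly (m : ℕ) :
    goldenForm X (fibPolyRev (2 * m + 1)) (fibPoly (2 * m + 1)) = -X ^ (2 * m + 2) ∧
    goldenForm X (fibPolyRev (2 * m + 2)) (fibPoly (2 * m + 2)) = X ^ (2 * m + 1) ∧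
    goldenForm X (fibPolyRev (2 * m + 1) + fibPolyRev (2 * m + 2))
      (fibPoly (2 * m + 1) + fibPoly (2 * m + 2)) = X ^ (2 * m + 1) * (2 - 2 * X - X ^ 2) := by
  induction m with
  | zero =>
    simp only [Nat.mul_zero, Nat.zero_add, goldenForm, fibPolyRev_one, fibPolyRev_two,
      fibPoly_one, fibPoly_two]
    refine ⟨by ring, by ring, by ring⟩
  | succ m ih =>
    obtain ⟨hu, hw, huw⟩ := ih
    have hA₃ : fibPolyRev (2 * m + 3) = X * fibPolyRev (2 * m + 2) + fibPolyRev (2 * m + 1) :=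
      fibPolyRev_add_two_of_odd (odd_two_mul_add_one m)
    have hA₄ : fibPolyRev (2 * m + 4) = fibPolyRev (2 * m + 3) + X ^ 2 * fibPolyRev (2 * m + 2) :=
      fibPolyRev_add_two_of_even ⟨m + 1, by ring⟩ (by omega)
    have hF₃ : fibPoly (2 * m + 3) = X * fibPoly (2 * m + 2) + fibPoly (2 * m + 1) :=
      fibPoly_add_two_of_odd (odd_two_mul_add_one m)
    have hF₄ : fibPoly (2 * m + 4) = fibPoly (2 * m + 3) + X ^ 2 * fibPoly (2 * m + 2) :=
      fibPoly_add_two_of_even ⟨m + 1, by ring⟩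
    rw [show 2 * (m + 1) + 1 = 2 * m + 3 by ring, show 2 * (m + 1) + 2 = 2 * m + 4 by ring,
      hA₄, hF₄, hA₃, hF₃]
    simp only [goldenForm] at *
    refine ⟨?_, ?_, ?_⟩
    · linear_combination (X ^ 2 - X) * hw + (1 - X) * hu + X * huw
    · linear_combination (1 - X - X ^ 2) * hu + ((X + X ^ 2) ^ 2 - X - X ^ 2) * hw +
        (X + X ^ 2) * huw
    · linear_combination (4 - 4 * X - 2 * X ^ 2) * hu +
        ((2 * X + X ^ 2) ^ 2 - 4 * X - 2 * X ^ 2) * hw + (4 * X + 2 * X ^ 2) * huw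

theorem X_pow_dvd_goldenForm_fibPolyRev_fibPoly (n : ℕ) :
    X ^ (n - 1) ∣ goldenForm X (fibPolyRev n) (fibPoly n) := by
  obtain ⟨m, rfl | rfl⟩ := Nat.even_or_odd' n
  · rcases m with _ | m
    · simp
    · rw [show 2 * (m + 1) = 2 * m + 2 by ring, (goldenForm_fibPolyRev_fibPoly m).2.1]
      exact pow_dvd_pow X (by omega)
  · rw [(goldenForm_fibPolyRev_fibPoly m).1, dvd_neg]
    exact pow_dvd_pow X (by omega)

namespace PowerSeries

theorem map_inv {K L : Type*} [Field K] [Field L] (σ : K →+* L) (φ : K⟦X⟧) :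
    map σ φ⁻¹ = (map σ φ)⁻¹ := by
  have hσφ : constantCoeff (map σ φ) = σ (constantCoeff φ) := by
    rw [← coeff_zero_eq_constantCoeff_apply, coeff_map, coeff_zero_eq_constantCoeff_apply]
  by_cases hφ : constantCoeff φ = 0
  · rw [inv_eq_zero.mpr hφ, inv_eq_zero.mpr (by rw [hσφ, hφ, map_zero]), map_zero]
  · replace hσφ : constantCoeff (map σ φ) ≠ 0 := by rwa [hσφ, _root_.map_ne_zero]
    rw [eq_inv_iff_mul_eq_one hσφ, ← map_mul, PowerSeries.inv_mul_cancel φ hφ, map_one]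

theorem coeff_mul_inv_eq_of_X_pow_dvd_goldenForm {K : Type*} [Field K] {φ a b : K⟦X⟧} {k : ℕ}
    (hφ : X * φ ^ 2 = (X ^ 2 + X - 1) * φ + 1) (hb : constantCoeff b ≠ 0)
    (hab : X ^ (k + 1) ∣ goldenForm X a b) : coeff k (a * b⁻¹) = coeff k φ := by
  obtain ⟨c, hc⟩ := hab
  set u := X * φ * a + b
  have hu : constantCoeff u ≠ 0 := by
    simpa [u] using hb
  have hdiff : a * b⁻¹ - φ = X ^ (k + 1) * (φ * c * u⁻¹ * b⁻¹) := by
    linear_combination (φ * u⁻¹ * b⁻¹) * hc - (u⁻¹ * b⁻¹) * mul_goldenForm_eq hφ a b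
      - ((a - φ * b) * b⁻¹) * PowerSeries.mul_inv_cancel u hu
      + φ * PowerSeries.mul_inv_cancel b hb
  have := congrArg (coeff k) hdiff
  rwa [map_sub, coeff_X_pow_mul', if_neg (by omega), sub_eq_zero] at this

end PowerSeries

section

variable {K : Type*} [Field K]

theorem X_pow_dvd_goldenForm_map_fibPolyRev_fibPoly (n : ℕ) :
    (PowerSeries.X : PowerSeries K) ^ (n - 1) ∣ goldenForm PowerSeries.X
      (((fibPolyRev n).map (Int.castRingHom K) : K[X]) : PowerSeries K)
      (((fibPoly n).map (Int.castRingHom K) : K[X]) : PowerSeries K) := by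
  simpa [map_goldenForm] using map_dvd
    (coeToPowerSeries.ringHom.comp (mapRingHom (Int.castRingHom K)))
    (X_pow_dvd_goldenForm_fibPolyRev_fibPoly n)

theorem map_fibRatio [CharZero K] (n : ℕ) :
    PowerSeries.map (Rat.castHom K) (fibRatio n) =
      (((fibPolyRev n).map (Int.castRingHom K) : K[X]) : PowerSeries K) *
        (((fibPoly n).map (Int.castRingHom K) : K[X]) : PowerSeries K)⁻¹ := by
  rw [fibRatio, map_mul, PowerSeries.map_inv, ← polynomial_map_coe, ← polynomial_map_coe,
    Polynomial.map_map, Polynomial.map_map, RingHom.ext_int ((Rat.castHom K).comp _)]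
  rfl

end

theorem fibRatio_coeff_stabilizes_to_qGoldenRatio
    (f : PowerSeries ℝ)
    (hf : PowerSeries.X * f ^ 2 = (PowerSeries.X ^ 2 + PowerSeries.X - 1) * f + 1) :
    ∀ k : ℕ, ∃ N : ℕ, 2 ≤ N ∧ ∀ n : ℕ, N ≤ n →
      ((PowerSeries.coeff k (fibRatio n) : ℚ) : ℝ) = PowerSeries.coeff k f := by
  intro k
  refine ⟨k + 2, le_add_self, fun n hn => ?_⟩
  have hF : PowerSeries.constantCoeff
      (((fibPoly n).map (Int.castRingHom ℝ) : ℝ[X]) : PowerSeries ℝ) ≠ 0 := by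
    rw [constantCoeff_coe, coeff_map, coeff_fibPoly_zero (by omega), map_one]
    exact one_ne_zero
  have hdvd := (pow_dvd_pow PowerSeries.X (by omega : k + 1 ≤ n - 1)).trans
    (X_pow_dvd_goldenForm_map_fibPolyRev_fibPoly (K := ℝ) n)
  rw [← Rat.coe_castHom, ← PowerSeries.coeff_map, map_fibRatio]
  exact PowerSeries.coeff_mul_inv_eq_of_X_pow_dvd_goldenForm hf hF hdvd
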